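/- (Theorem 3.3(i)) Assume ρ < 1, let ε ∈ (ε_min, ε_max) and let δ ≥ δ*(ε). Then q_δ ∈ M_ε(μ,σ), and for every q ∈ M_ε(μ,σ) one has J_δ(q) ≤ μ − δ(ε_min + 2σσ_F) + σσ_δ, with equality if and only if q = q_δ almost everywhere; hence q_δ is the unique (up to a.e. equality) maximizer of J_δ over M_ε(μ,σ). -/

import Mathlib

open MeasureTheory Set Filter

noncomputable section

/-- Integral over the interval (0,1) with Lebesgue measure. -/
def intI (f : ℝ → ℝ) : ℝ := ∫ u in Ioo (0:ℝ) 1, f u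

/-- Square integrability on (0,1). -/
def SqInt (f : ℝ → ℝ) : Prop :=
  IntegrableOn f (Ioo (0:ℝ) 1) volume ∧ IntegrableOn (fun u => f u ^ 2) (Ioo (0:ℝ) 1) volume

/-- A quantile function: nondecreasing and square-integrable on (0,1). -/
def IsQuantile (q : ℝ → ℝ) : Prop := MonotoneOn q (Ioo (0:ℝ) 1) ∧ SqInt q

/-- Membership in `M(μ,σ)` : quantile function with prescribed first two moments. -/
def MemM (μ σ : ℝ) (q : ℝ → ℝ) : Prop :=
  IsQuantile q ∧ intI q = μ ∧ intI (fun u => q u ^ 2) = μ ^ 2 + σ ^ 2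

/-- Squared Wasserstein distance between (quantile) functions on (0,1). -/
def W2 (p q : ℝ → ℝ) : ℝ := intI (fun u => (p u - q u) ^ 2)

/-- Almost-everywhere equality on (0,1). -/
def AeEqI (f g : ℝ → ℝ) : Prop := f =ᵐ[(volume : Measure ℝ).restrict (Ioo (0:ℝ) 1)] g

/-- The penalized objective `J_δ(q) = ∫ γ q − δ d²(q_F, q)`. -/
def Jpen (γ qF : ℝ → ℝ) (δ : ℝ) (q : ℝ → ℝ) : ℝ :=
  intI (fun u => γ u * q u) - δ * W2 qF q

/-- `σ_δ = sqrt(σ₀² + 4δ²σ_F² + 4δσ₀σ_Fρ)`. -/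
def sigD (σ0 σF ρ δ : ℝ) : ℝ := Real.sqrt (σ0 ^ 2 + 4 * δ ^ 2 * σF ^ 2 + 4 * δ * σ0 * σF * ρ)

/-- The candidate optimizer `q_δ(u) = μ − (σ/σ_δ) μ_δ + (σ/σ_δ)(γ(u) + 2δ q_F(u))`,
where `μ_δ = 1 + 2δμ_F`. -/
def qD (μ σ μF σ0 σF ρ δ : ℝ) (γ qF : ℝ → ℝ) : ℝ → ℝ := fun u =>
  μ - σ / sigD σ0 σF ρ δ * (1 + 2 * δ * μF) + σ / sigD σ0 σF ρ δ * (γ u + 2 * δ * qF u)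

lemma intI_congr {f g : ℝ → ℝ} (h : ∀ u, f u = g u) : intI f = intI g := by
  have : f = g := funext h
  rw [intI, this, intI]

lemma intI_const (c : ℝ) : intI (fun _ => c) = c := by
  simp [intI]

lemma integrableOn_constI (c : ℝ) : IntegrableOn (fun _ : ℝ => c) (Ioo (0:ℝ) 1) volume := by
  apply (integrableOn_const_iff (C := c)).mpr; right; simp

lemma intI_add {f g : ℝ → ℝ} (hf : IntegrableOn f (Ioo (0:ℝ) 1) volume)
    (hg : IntegrableOn g (Ioo (0:ℝ) 1) volume) :
    intI (fun u => f u + g u) = intI f + intI g := integral_add hf hg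

lemma intI_cmul (c : ℝ) (f : ℝ → ℝ) : intI (fun u => c * f u) = c * intI f :=
  integral_const_mul c f

lemma sqInt_mul {f g : ℝ → ℝ} (hf : SqInt f) (hg : SqInt g) :
    IntegrableOn (fun u => f u * g u) (Ioo (0:ℝ) 1) volume := by
  have hb : IntegrableOn (fun u => (f u ^ 2 + g u ^ 2)/2) (Ioo (0:ℝ) 1) volume :=
    (hf.2.add hg.2).div_const 2
  refine Integrable.mono' hb (hf.1.aestronglyMeasurable.mul hg.1.aestronglyMeasurable) ?_
  refine Eventually.of_forall fun u => ?_
  rw [Real.norm_eq_abs, abs_mul]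
  nlinarith [sq_nonneg (|f u| - |g u|), sq_abs (f u), sq_abs (g u), abs_nonneg (f u),
    abs_nonneg (g u)]

lemma intI_bilin (f g h : ℝ → ℝ)
    (hf : IntegrableOn f (Ioo (0:ℝ) 1) volume)
    (hg : IntegrableOn g (Ioo (0:ℝ) 1) volume)
    (hh : IntegrableOn h (Ioo (0:ℝ) 1) volume)
    (hff : IntegrableOn (fun u => f u ^ 2) (Ioo (0:ℝ) 1) volume)
    (hgg : IntegrableOn (fun u => g u ^ 2) (Ioo (0:ℝ) 1) volume)
    (hhh : IntegrableOn (fun u => h u ^ 2) (Ioo (0:ℝ) 1) volume)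
    (hfg : IntegrableOn (fun u => f u * g u) (Ioo (0:ℝ) 1) volume)
    (hfh : IntegrableOn (fun u => f u * h u) (Ioo (0:ℝ) 1) volume)
    (hgh : IntegrableOn (fun u => g u * h u) (Ioo (0:ℝ) 1) volume)
    (a₁ a₂ a₃ a₄ b₁ b₂ b₃ b₄ : ℝ) :
    intI (fun u => (a₁ * f u + a₂ * g u + a₃ * h u + a₄) * (b₁ * f u + b₂ * g u + b₃ * h u + b₄)) =
      a₁*b₁ * intI (fun u => f u ^ 2) + a₂*b₂ * intI (fun u => g u ^ 2)
      + a₃*b₃ * intI (fun u => h u ^ 2)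
      + (a₁*b₂ + a₂*b₁) * intI (fun u => f u * g u)
      + (a₁*b₃ + a₃*b₁) * intI (fun u => f u * h u)
      + (a₂*b₃ + a₃*b₂) * intI (fun u => g u * h u)
      + (a₁*b₄ + a₄*b₁) * intI f + (a₂*b₄ + a₄*b₂) * intI g
      + (a₃*b₄ + a₄*b₃) * intI h + a₄*b₄ := by
  have t10 : IntegrableOn (fun _ : ℝ => a₄*b₄) (Ioo (0:ℝ) 1) volume := integrableOn_constI _
  have t9 : IntegrableOn (fun u => (a₃*b₄ + a₄*b₃) * h u + a₄*b₄) (Ioo (0:ℝ) 1) volume :=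
    (hh.const_mul _).add t10
  have t8 : IntegrableOn (fun u => (a₂*b₄ + a₄*b₂) * g u + ((a₃*b₄ + a₄*b₃) * h u + a₄*b₄))
      (Ioo (0:ℝ) 1) volume := (hg.const_mul _).add t9
  have t7 : IntegrableOn (fun u => (a₁*b₄ + a₄*b₁) * f u + ((a₂*b₄ + a₄*b₂) * g u +
      ((a₃*b₄ + a₄*b₃) * h u + a₄*b₄))) (Ioo (0:ℝ) 1) volume := (hf.const_mul _).add t8
  have t6 : IntegrableOn (fun u => (a₂*b₃ + a₃*b₂) * (g u * h u) + ((a₁*b₄ + a₄*b₁) * f u +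
      ((a₂*b₄ + a₄*b₂) * g u + ((a₃*b₄ + a₄*b₃) * h u + a₄*b₄)))) (Ioo (0:ℝ) 1) volume :=
    (hgh.const_mul _).add t7
  have t5 : IntegrableOn (fun u => (a₁*b₃ + a₃*b₁) * (f u * h u) + ((a₂*b₃ + a₃*b₂) * (g u * h u)
      + ((a₁*b₄ + a₄*b₁) * f u + ((a₂*b₄ + a₄*b₂) * g u + ((a₃*b₄ + a₄*b₃) * h u + a₄*b₄)))))
      (Ioo (0:ℝ) 1) volume := (hfh.const_mul _).add t6
  have t4 : IntegrableOn (fun u => (a₁*b₂ + a₂*b₁) * (f u * g u) + ((a₁*b₃ + a₃*b₁) * (f u * h u)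
      + ((a₂*b₃ + a₃*b₂) * (g u * h u) + ((a₁*b₄ + a₄*b₁) * f u + ((a₂*b₄ + a₄*b₂) * g u +
      ((a₃*b₄ + a₄*b₃) * h u + a₄*b₄)))))) (Ioo (0:ℝ) 1) volume := (hfg.const_mul _).add t5
  have t3 : IntegrableOn (fun u => a₃*b₃ * h u ^ 2 + ((a₁*b₂ + a₂*b₁) * (f u * g u) +
      ((a₁*b₃ + a₃*b₁) * (f u * h u) + ((a₂*b₃ + a₃*b₂) * (g u * h u) + ((a₁*b₄ + a₄*b₁) * f u +
      ((a₂*b₄ + a₄*b₂) * g u + ((a₃*b₄ + a₄*b₃) * h u + a₄*b₄))))))) (Ioo (0:ℝ) 1) volume :=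
    (hhh.const_mul _).add t4
  have t2 : IntegrableOn (fun u => a₂*b₂ * g u ^ 2 + (a₃*b₃ * h u ^ 2 + ((a₁*b₂ + a₂*b₁) *
      (f u * g u) + ((a₁*b₃ + a₃*b₁) * (f u * h u) + ((a₂*b₃ + a₃*b₂) * (g u * h u) +
      ((a₁*b₄ + a₄*b₁) * f u + ((a₂*b₄ + a₄*b₂) * g u + ((a₃*b₄ + a₄*b₃) * h u + a₄*b₄))))))))
      (Ioo (0:ℝ) 1) volume := (hgg.const_mul _).add t3
  have e : intI (fun u => (a₁ * f u + a₂ * g u + a₃ * h u + a₄) *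
      (b₁ * f u + b₂ * g u + b₃ * h u + b₄)) =
      intI (fun u => a₁*b₁ * f u ^ 2 + (a₂*b₂ * g u ^ 2 + (a₃*b₃ * h u ^ 2 +
      ((a₁*b₂ + a₂*b₁) * (f u * g u) + ((a₁*b₃ + a₃*b₁) * (f u * h u) +
      ((a₂*b₃ + a₃*b₂) * (g u * h u) + ((a₁*b₄ + a₄*b₁) * f u + ((a₂*b₄ + a₄*b₂) * g u +
      ((a₃*b₄ + a₄*b₃) * h u + a₄*b₄))))))))) := intI_congr (fun u => by ring)
  rw [e, intI_add (hff.const_mul _) t2, intI_cmul,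
      intI_add (hgg.const_mul _) t3, intI_cmul,
      intI_add (hhh.const_mul _) t4, intI_cmul,
      intI_add (hfg.const_mul _) t5, intI_cmul,
      intI_add (hfh.const_mul _) t6, intI_cmul,
      intI_add (hgh.const_mul _) t7, intI_cmul,
      intI_add (hf.const_mul _) t8, intI_cmul,
      intI_add (hg.const_mul _) t9, intI_cmul,
      intI_add (hh.const_mul _) t10, intI_cmul, intI_const]
  ring

lemma intI_lin2 (f g : ℝ → ℝ)
    (hf : IntegrableOn f (Ioo (0:ℝ) 1) volume)
    (hg : IntegrableOn g (Ioo (0:ℝ) 1) volume) (a₁ a₂ a₃ : ℝ) :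
    intI (fun u => a₁ * f u + (a₂ * g u + a₃)) = a₁ * intI f + (a₂ * intI g + a₃) := by
  have t2 : IntegrableOn (fun u => a₂ * g u + a₃) (Ioo (0:ℝ) 1) volume :=
    (hg.const_mul _).add (integrableOn_constI _)
  rw [intI_add (hf.const_mul _) t2, intI_cmul,
    intI_add (hg.const_mul _) (integrableOn_constI _), intI_cmul, intI_const]

lemma bilin_integrable (f g h : ℝ → ℝ)
    (hf : IntegrableOn f (Ioo (0:ℝ) 1) volume)
    (hg : IntegrableOn g (Ioo (0:ℝ) 1) volume)
    (hh : IntegrableOn h (Ioo (0:ℝ) 1) volume)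
    (hff : IntegrableOn (fun u => f u ^ 2) (Ioo (0:ℝ) 1) volume)
    (hgg : IntegrableOn (fun u => g u ^ 2) (Ioo (0:ℝ) 1) volume)
    (hhh : IntegrableOn (fun u => h u ^ 2) (Ioo (0:ℝ) 1) volume)
    (hfg : IntegrableOn (fun u => f u * g u) (Ioo (0:ℝ) 1) volume)
    (hfh : IntegrableOn (fun u => f u * h u) (Ioo (0:ℝ) 1) volume)
    (hgh : IntegrableOn (fun u => g u * h u) (Ioo (0:ℝ) 1) volume)
    (a₁ a₂ a₃ a₄ b₁ b₂ b₃ b₄ : ℝ) :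
    IntegrableOn (fun u => (a₁ * f u + a₂ * g u + a₃ * h u + a₄) *
      (b₁ * f u + b₂ * g u + b₃ * h u + b₄)) (Ioo (0:ℝ) 1) volume := by
  have t10 : IntegrableOn (fun _ : ℝ => a₄*b₄) (Ioo (0:ℝ) 1) volume := integrableOn_constI _
  have t9 : IntegrableOn (fun u => (a₃*b₄ + a₄*b₃) * h u + a₄*b₄) (Ioo (0:ℝ) 1) volume :=
    (hh.const_mul _).add t10
  have t8 : IntegrableOn (fun u => (a₂*b₄ + a₄*b₂) * g u + ((a₃*b₄ + a₄*b₃) * h u + a₄*b₄))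
      (Ioo (0:ℝ) 1) volume := (hg.const_mul _).add t9
  have t7 : IntegrableOn (fun u => (a₁*b₄ + a₄*b₁) * f u + ((a₂*b₄ + a₄*b₂) * g u +
      ((a₃*b₄ + a₄*b₃) * h u + a₄*b₄))) (Ioo (0:ℝ) 1) volume := (hf.const_mul _).add t8
  have t6 : IntegrableOn (fun u => (a₂*b₃ + a₃*b₂) * (g u * h u) + ((a₁*b₄ + a₄*b₁) * f u +
      ((a₂*b₄ + a₄*b₂) * g u + ((a₃*b₄ + a₄*b₃) * h u + a₄*b₄)))) (Ioo (0:ℝ) 1) volume :=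
    (hgh.const_mul _).add t7
  have t5 : IntegrableOn (fun u => (a₁*b₃ + a₃*b₁) * (f u * h u) + ((a₂*b₃ + a₃*b₂) * (g u * h u)
      + ((a₁*b₄ + a₄*b₁) * f u + ((a₂*b₄ + a₄*b₂) * g u + ((a₃*b₄ + a₄*b₃) * h u + a₄*b₄)))))
      (Ioo (0:ℝ) 1) volume := (hfh.const_mul _).add t6
  have t4 : IntegrableOn (fun u => (a₁*b₂ + a₂*b₁) * (f u * g u) + ((a₁*b₃ + a₃*b₁) * (f u * h u)
      + ((a₂*b₃ + a₃*b₂) * (g u * h u) + ((a₁*b₄ + a₄*b₁) * f u + ((a₂*b₄ + a₄*b₂) * g u +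
      ((a₃*b₄ + a₄*b₃) * h u + a₄*b₄)))))) (Ioo (0:ℝ) 1) volume := (hfg.const_mul _).add t5
  have t3 : IntegrableOn (fun u => a₃*b₃ * h u ^ 2 + ((a₁*b₂ + a₂*b₁) * (f u * g u) +
      ((a₁*b₃ + a₃*b₁) * (f u * h u) + ((a₂*b₃ + a₃*b₂) * (g u * h u) + ((a₁*b₄ + a₄*b₁) * f u +
      ((a₂*b₄ + a₄*b₂) * g u + ((a₃*b₄ + a₄*b₃) * h u + a₄*b₄))))))) (Ioo (0:ℝ) 1) volume :=
    (hhh.const_mul _).add t4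
  have t2 : IntegrableOn (fun u => a₂*b₂ * g u ^ 2 + (a₃*b₃ * h u ^ 2 + ((a₁*b₂ + a₂*b₁) *
      (f u * g u) + ((a₁*b₃ + a₃*b₁) * (f u * h u) + ((a₂*b₃ + a₃*b₂) * (g u * h u) +
      ((a₁*b₄ + a₄*b₁) * f u + ((a₂*b₄ + a₄*b₂) * g u + ((a₃*b₄ + a₄*b₃) * h u + a₄*b₄))))))))
      (Ioo (0:ℝ) 1) volume := (hgg.const_mul _).add t3
  have e : (fun u => (a₁ * f u + a₂ * g u + a₃ * h u + a₄) *
      (b₁ * f u + b₂ * g u + b₃ * h u + b₄)) =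
      (fun u => a₁*b₁ * f u ^ 2 + (a₂*b₂ * g u ^ 2 + (a₃*b₃ * h u ^ 2 +
      ((a₁*b₂ + a₂*b₁) * (f u * g u) + ((a₁*b₃ + a₃*b₁) * (f u * h u) +
      ((a₂*b₃ + a₃*b₂) * (g u * h u) + ((a₁*b₄ + a₄*b₁) * f u + ((a₂*b₄ + a₄*b₂) * g u +
      ((a₃*b₄ + a₄*b₃) * h u + a₄*b₄))))))))) := funext fun u => by ring
  rw [e]
  exact (hff.const_mul _).add t2

set_option maxHeartbeats 2000000 in
theorem statement9
    (μ μF σ σF : ℝ) (hσpos : 0 < σ) (hσFpos : 0 < σF)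
    (qF : ℝ → ℝ) (hqF : IsQuantile qF)
    (hqFm : intI qF = μF) (hqF2 : intI (fun u => qF u ^ 2) = μF ^ 2 + σF ^ 2)
    (γ : ℝ → ℝ) (hγmono : MonotoneOn γ (Ioo (0:ℝ) 1)) (hγsq : SqInt γ)
    (hγ1 : intI γ = 1)
    (σ0 : ℝ) (hσ0 : σ0 = Real.sqrt (intI (fun u => γ u ^ 2) - 1)) (hσ0pos : 0 < σ0)
    (ρ : ℝ) (hρ : ρ = (intI (fun u => γ u * qF u) - μF) / (σ0 * σF))
    (εmin : ℝ) (hεmin : εmin = (μF - μ) ^ 2 + (σF - σ) ^ 2)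
    (εmax : ℝ) (hεmax : εmax = εmin + 2 * σ * σF * (1 - ρ))
    (hρ1 : ρ < 1)
    (ε : ℝ) (hε1 : εmin < ε) (hε2 : ε < εmax)
    (δs : ℝ)
    (hδs : δs = -(σ0 * ρ) / (2 * σF) +
      σ0 * Real.sqrt (1 - ρ ^ 2) * (εmin + 2 * σ * σF - ε) /
        (2 * σF * Real.sqrt ((εmin + 4 * σ * σF - ε) * (ε - εmin))))
    (δ : ℝ) (hδ : δs ≤ δ) :
    (MemM μ σ (qD μ σ μF σ0 σF ρ δ γ qF) ∧
      W2 qF (qD μ σ μF σ0 σF ρ δ γ qF) ≤ ε) ∧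
    ∀ q : ℝ → ℝ, MemM μ σ q → W2 qF q ≤ ε →
      Jpen γ qF δ q ≤ μ - δ * (εmin + 2 * σ * σF) + σ * sigD σ0 σF ρ δ ∧
      (Jpen γ qF δ q = μ - δ * (εmin + 2 * σ * σF) + σ * sigD σ0 σF ρ δ ↔
        AeEqI q (qD μ σ μF σ0 σF ρ δ γ qF)) := by
  have hγi := hγsq.1
  have hγ2i := hγsq.2
  have hqFmono := hqF.1
  have hqFsq := hqF.2
  have hqFi := hqFsq.1
  have hqF2i := hqFsq.2
  have hγqF : IntegrableOn (fun u => γ u * qF u) (Ioo (0:ℝ) 1) volume := sqInt_mul hγsq hqFsq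
  have hqFqF : IntegrableOn (fun u => qF u * qF u) (Ioo (0:ℝ) 1) volume := sqInt_mul hqFsq hqFsq
  have hqFm2 : intI (fun u => qF u * qF u) = μF ^ 2 + σF ^ 2 := by
    rw [show (fun u => qF u * qF u) = (fun u => qF u ^ 2) from funext fun u => by ring, hqF2]
  have hx1 : 0 < intI (fun u => γ u ^ 2) - 1 := by
    rcases le_or_gt (intI (fun u => γ u ^ 2) - 1) 0 with hcon | hcon
    · rw [hσ0, Real.sqrt_eq_zero'.mpr hcon] at hσ0pos
      exact absurd hσ0pos (lt_irrefl 0)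
    · exact hcon
  have hγ2 : intI (fun u => γ u ^ 2) = 1 + σ0 ^ 2 := by
    rw [hσ0, Real.sq_sqrt hx1.le]; ring
  have hC : intI (fun u => γ u * qF u) = μF + σ0 * σF * ρ := by
    rw [hρ]; field_simp; ring
  -- Chebyshev integral inequality: comonotone γ and qF are nonnegatively correlated
  have hcheb : μF ≤ intI (fun u => γ u * qF u) := by
    have hout : 0 ≤ intI (fun u => γ u * qF u +
        ((-μF) * γ u + ((-1) * qF u + intI (fun v => γ v * qF v)))) := by
      apply setIntegral_nonneg measurableSet_Ioo
      intro u hu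
      have hin : intI (fun v => (γ u - γ v) * (qF u - qF v)) =
          γ u * qF u + ((-μF) * γ u + ((-1) * qF u + intI (fun v => γ v * qF v))) := by
        have tc : IntegrableOn (fun v => γ v * qF v + γ u * qF u) (Ioo (0:ℝ) 1) volume :=
          hγqF.add (integrableOn_constI _)
        have tb : IntegrableOn (fun v => (- qF u) * γ v + (γ v * qF v + γ u * qF u))
            (Ioo (0:ℝ) 1) volume := (hγi.const_mul _).add tc
        have e : intI (fun v => (γ u - γ v) * (qF u - qF v)) =
            intI (fun v => (- γ u) * qF v + ((- qF u) * γ v + (γ v * qF v + γ u * qF u))) :=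
          intI_congr (fun v => by ring)
        rw [e, intI_add (hqFi.const_mul _) tb, intI_cmul,
            intI_add (hγi.const_mul _) tc, intI_cmul,
            intI_add hγqF (integrableOn_constI _), intI_const, hγ1, hqFm]
        ring
      rw [← hin]
      apply setIntegral_nonneg measurableSet_Ioo
      intro v hv
      rcases le_total u v with hle | hle
      · nlinarith [hγmono hu hv hle, hqFmono hu hv hle]
      · nlinarith [hγmono hv hu hle, hqFmono hv hu hle]
    have tc : IntegrableOn (fun u : ℝ => (-1) * qF u + intI (fun v => γ v * qF v))
        (Ioo (0:ℝ) 1) volume := (hqFi.const_mul _).add (integrableOn_constI _)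
    have tb : IntegrableOn (fun u => (-μF) * γ u + ((-1) * qF u + intI (fun v => γ v * qF v)))
        (Ioo (0:ℝ) 1) volume := (hγi.const_mul _).add tc
    rw [intI_add hγqF tb, intI_add (hγi.const_mul _) tc, intI_cmul,
        intI_add (hqFi.const_mul _) (integrableOn_constI _), intI_cmul, intI_const, hγ1, hqFm]
        at hout
    linarith
  have hρ0 : 0 ≤ ρ := by
    rw [hρ]
    exact div_nonneg (by linarith only [hcheb]) (by positivity)
  have hρ2 : ρ ^ 2 < 1 := by nlinarith only [hρ0, hρ1]
  have hs1pos : 0 < Real.sqrt (1 - ρ ^ 2) := Real.sqrt_pos.mpr (by nlinarith only [hρ0, hρ1])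
  have hs1sq : Real.sqrt (1 - ρ ^ 2) ^ 2 = 1 - ρ ^ 2 := Real.sq_sqrt (by nlinarith only [hρ0, hρ1])
  have hT1 : 2 * σ * σF * ρ < εmin + 2 * σ * σF - ε := by
    rw [hεmax] at hε2; nlinarith only [hε2]
  have hTpos : 0 < εmin + 2 * σ * σF - ε := by
    nlinarith only [hT1, mul_nonneg (mul_nonneg (by linarith : (0:ℝ) ≤ 2 * σ) hσFpos.le) hρ0]
  have hDqpos : 0 < (εmin + 4 * σ * σF - ε) * (ε - εmin) :=
    mul_pos (by nlinarith only [hTpos, mul_pos hσpos hσFpos]) (by linarith only [hε1])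
  have hDpos : 0 < Real.sqrt ((εmin + 4 * σ * σF - ε) * (ε - εmin)) := Real.sqrt_pos.mpr hDqpos
  have hDsq : Real.sqrt ((εmin + 4 * σ * σF - ε) * (ε - εmin)) ^ 2 =
      (εmin + 4 * σ * σF - ε) * (ε - εmin) := Real.sq_sqrt hDqpos.le
  set s1 := Real.sqrt (1 - ρ ^ 2) with hs1def
  set D := Real.sqrt ((εmin + 4 * σ * σF - ε) * (ε - εmin)) with hDdef
  have e3 : δs = (σ0 * s1 * (εmin + 2 * σ * σF - ε) - σ0 * ρ * D) / (2 * σF * D) := by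
    rw [hδs]; field_simp; ring
  have hy1 : (σ0 * ρ * D) ^ 2 < (σ0 * s1 * (εmin + 2 * σ * σF - ε)) ^ 2 := by
    have e1 : (σ0 * s1 * (εmin + 2 * σ * σF - ε)) ^ 2 =
        σ0 ^ 2 * (1 - ρ ^ 2) * (εmin + 2 * σ * σF - ε) ^ 2 := by
      rw [mul_pow, mul_pow, hs1sq]
    have e2 : (σ0 * ρ * D) ^ 2 = σ0 ^ 2 * ρ ^ 2 * ((εmin + 4 * σ * σF - ε) * (ε - εmin)) := by
      rw [mul_pow, mul_pow, hDsq]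
    rw [e1, e2]
    have hpp : 0 < (εmin + 2 * σ * σF - ε - 2 * σ * σF * ρ) *
        (εmin + 2 * σ * σF - ε + 2 * σ * σF * ρ) :=
      mul_pos (by linarith)
        (by nlinarith only [hTpos, mul_nonneg (mul_nonneg (by linarith : (0:ℝ) ≤ 2 * σ) hσFpos.le) hρ0])
    nlinarith only [mul_pos (mul_pos hσ0pos hσ0pos) hpp]
  have hkey1 : σ0 * ρ * D < σ0 * s1 * (εmin + 2 * σ * σF - ε) := by
    nlinarith only [hy1, mul_nonneg (mul_nonneg hσ0pos.le hρ0) hDpos.le,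
      mul_pos (mul_pos hσ0pos hs1pos) hTpos]
  have hδspos : 0 < δs := by
    rw [e3]; exact div_pos (by linarith only [hkey1]) (by positivity)
  have hδpos : 0 < δ := lt_of_lt_of_le hδspos hδ
  have haD : σ0 * s1 * (εmin + 2 * σ * σF - ε) ≤ (σ0 * ρ + 2 * δ * σF) * D := by
    have h4 := mul_le_mul_of_nonneg_right hδ (by positivity : (0:ℝ) ≤ 2 * σF * D)
    rw [e3, div_mul_cancel₀ _ (by positivity : (2 * σF * D) ≠ 0)] at h4
    linarith only [h4]
  set σδ := sigD σ0 σF ρ δ with hσδdef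
  have hσδ_eq : σδ = Real.sqrt (σ0 ^ 2 + 4 * δ ^ 2 * σF ^ 2 + 4 * δ * σ0 * σF * ρ) := by
    rw [hσδdef]; rfl
  have hVδpos : 0 < σ0 ^ 2 + 4 * δ ^ 2 * σF ^ 2 + 4 * δ * σ0 * σF * ρ := by
    nlinarith only [sq_nonneg (σ0 * ρ + 2 * δ * σF),
      mul_pos (mul_pos hσ0pos hσ0pos) (show (0:ℝ) < 1 - ρ ^ 2 by nlinarith only [hρ0, hρ1])]
  have hσδpos : 0 < σδ := by rw [hσδ_eq]; exact Real.sqrt_pos.mpr hVδpos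
  have hσδsq : σδ ^ 2 = σ0 ^ 2 + 4 * δ ^ 2 * σF ^ 2 + 4 * δ * σ0 * σF * ρ := by
    rw [hσδ_eq]; exact Real.sq_sqrt hVδpos.le
  have hapos : 0 < σ0 * ρ + 2 * δ * σF := by
    nlinarith only [mul_nonneg hσ0pos.le hρ0, mul_pos hδpos hσFpos]
  have hkey : (εmin + 2 * σ * σF - ε) * σδ ≤ 2 * σ * σF * (σ0 * ρ + 2 * δ * σF) := by
    have h5 : (σ0 * s1 * (εmin + 2 * σ * σF - ε)) ^ 2 ≤ ((σ0 * ρ + 2 * δ * σF) * D) ^ 2 :=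
      pow_le_pow_left₀ (mul_nonneg (mul_nonneg hσ0pos.le hs1pos.le) hTpos.le) haD 2
    have e4 : ((σ0 * ρ + 2 * δ * σF) * D) ^ 2 =
        (σ0 * ρ + 2 * δ * σF) ^ 2 * ((εmin + 4 * σ * σF - ε) * (ε - εmin)) := by
      rw [mul_pow, hDsq]
    have e5 : (σ0 * s1 * (εmin + 2 * σ * σF - ε)) ^ 2 =
        σ0 ^ 2 * (1 - ρ ^ 2) * (εmin + 2 * σ * σF - ε) ^ 2 := by
      rw [mul_pow, mul_pow, hs1sq]
    rw [e4, e5] at h5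
    have hy2 : ((εmin + 2 * σ * σF - ε) * σδ) ^ 2 ≤
        (2 * σ * σF * (σ0 * ρ + 2 * δ * σF)) ^ 2 := by
      rw [mul_pow, hσδsq]
      nlinarith only [h5]
    nlinarith only [hy2, mul_pos hTpos hσδpos, mul_pos (by positivity : (0:ℝ) < 2 * σ * σF) hapos]
  -- the candidate optimizer
  have hqDpt : ∀ u, qD μ σ μF σ0 σF ρ δ γ qF u =
      σ / σδ * γ u + (2 * δ * (σ / σδ) * qF u + (μ - σ / σδ * (1 + 2 * δ * μF))) := by
    intro u
    simp only [qD, ← hσδdef]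
    ring
  have hqDfun : (qD μ σ μF σ0 σF ρ δ γ qF) = fun u =>
      σ / σδ * γ u + (2 * δ * (σ / σδ) * qF u + (μ - σ / σδ * (1 + 2 * δ * μF))) := funext hqDpt
  have hqDi : IntegrableOn (qD μ σ μF σ0 σF ρ δ γ qF) (Ioo (0:ℝ) 1) volume := by
    rw [hqDfun]
    exact (hγi.const_mul _).add ((hqFi.const_mul _).add (integrableOn_constI _))
  have hqD2i : IntegrableOn (fun u => qD μ σ μF σ0 σF ρ δ γ qF u ^ 2) (Ioo (0:ℝ) 1) volume := by
    have e : (fun u => qD μ σ μF σ0 σF ρ δ γ qF u ^ 2) = fun u =>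
        (σ / σδ * γ u + 2 * δ * (σ / σδ) * qF u + 0 * qF u + (μ - σ / σδ * (1 + 2 * δ * μF))) *
        (σ / σδ * γ u + 2 * δ * (σ / σδ) * qF u + 0 * qF u + (μ - σ / σδ * (1 + 2 * δ * μF))) :=
      funext fun u => by rw [hqDpt u]; ring
    rw [e]
    exact bilin_integrable γ qF qF hγi hqFi hqFi hγ2i hqF2i hqF2i hγqF hγqF hqFqF _ _ _ _ _ _ _ _
  have hqDm : intI (qD μ σ μF σ0 σF ρ δ γ qF) = μ := by
    rw [hqDfun, intI_lin2 γ qF hγi hqFi, hγ1, hqFm]; ring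
  have hc2 : (σ / σδ) ^ 2 * (σ0 ^ 2 + 4 * δ ^ 2 * σF ^ 2 + 4 * δ * σ0 * σF * ρ) = σ ^ 2 := by
    rw [← hσδsq, div_pow]
    exact div_mul_cancel₀ _ (pow_ne_zero 2 hσδpos.ne')
  have hqD2m : intI (fun u => qD μ σ μF σ0 σF ρ δ γ qF u ^ 2) = μ ^ 2 + σ ^ 2 := by
    have e : (fun u => qD μ σ μF σ0 σF ρ δ γ qF u ^ 2) = fun u =>
        (σ / σδ * γ u + 2 * δ * (σ / σδ) * qF u + 0 * qF u + (μ - σ / σδ * (1 + 2 * δ * μF))) *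
        (σ / σδ * γ u + 2 * δ * (σ / σδ) * qF u + 0 * qF u + (μ - σ / σδ * (1 + 2 * δ * μF))) :=
      funext fun u => by rw [hqDpt u]; ring
    rw [e, intI_bilin γ qF qF hγi hqFi hqFi hγ2i hqF2i hqF2i hγqF hγqF hqFqF _ _ _ _ _ _ _ _,
        hγ1, hqFm, hγ2, hqF2, hqFm2, hC]
    linear_combination hc2
  have hW2δval : W2 qF (qD μ σ μF σ0 σF ρ δ γ qF) =
      εmin + 2 * σ * σF - 2 * (σ / σδ) * σF * (σ0 * ρ + 2 * δ * σF) := by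
    have e : (fun u => (qF u - qD μ σ μF σ0 σF ρ δ γ qF u) ^ 2) = fun u =>
        (-(σ / σδ) * γ u + (1 - 2 * δ * (σ / σδ)) * qF u + 0 * qF u +
          (σ / σδ * (1 + 2 * δ * μF) - μ)) *
        (-(σ / σδ) * γ u + (1 - 2 * δ * (σ / σδ)) * qF u + 0 * qF u +
          (σ / σδ * (1 + 2 * δ * μF) - μ)) := funext fun u => by rw [hqDpt u]; ring
    simp only [W2]
    rw [e, intI_bilin γ qF qF hγi hqFi hqFi hγ2i hqF2i hqF2i hγqF hγqF hqFqF _ _ _ _ _ _ _ _,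
        hγ1, hqFm, hγ2, hqF2, hqFm2, hC]
    linear_combination hc2 - hεmin
  have hW2δle : W2 qF (qD μ σ μF σ0 σF ρ δ γ qF) ≤ ε := by
    have h6 : 2 * (σ / σδ) * σF * (σ0 * ρ + 2 * δ * σF) =
        2 * σ * σF * (σ0 * ρ + 2 * δ * σF) / σδ := by ring
    have h7 : εmin + 2 * σ * σF - ε ≤ 2 * σ * σF * (σ0 * ρ + 2 * δ * σF) / σδ :=
      (le_div_iff₀ hσδpos).mpr hkey
    rw [hW2δval, h6]
    linarith only [h7]
  have hqDmono : MonotoneOn (qD μ σ μF σ0 σF ρ δ γ qF) (Ioo (0:ℝ) 1) := by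
    intro u hu v hv huv
    rw [hqDpt u, hqDpt v]
    have hc0 : (0:ℝ) ≤ σ / σδ := by positivity
    have h1 := mul_le_mul_of_nonneg_left (hγmono hu hv huv) hc0
    have h2 := mul_le_mul_of_nonneg_left (hqFmono hu hv huv)
      (mul_nonneg (by linarith : (0:ℝ) ≤ 2 * δ) hc0)
    linarith only [h1, h2]
  refine ⟨⟨⟨⟨hqDmono, hqDi, hqD2i⟩, hqDm, hqD2m⟩, hW2δle⟩, ?_⟩
  intro q hq _
  obtain ⟨⟨hqmono, hqi, hq2i⟩, hqm, hq2m⟩ := hq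
  have hqsq : SqInt q := ⟨hqi, hq2i⟩
  have hγq : IntegrableOn (fun u => γ u * q u) (Ioo (0:ℝ) 1) volume := sqInt_mul hγsq hqsq
  have hqFq : IntegrableOn (fun u => qF u * q u) (Ioo (0:ℝ) 1) volume := sqInt_mul hqFsq hqsq
  have hbxy := intI_bilin γ qF q hγi hqFi hqi hγ2i hqF2i hq2i hγqF hγq hqFq
      1 (2*δ) 0 (-(1+2*δ*μF)) 0 0 1 (-μ)
  rw [hγ1, hqFm, hqm, hγ2, hqF2, hq2m, hC] at hbxy
  have hxy : intI (fun u => (1*γ u + 2*δ*qF u + 0*q u + -(1+2*δ*μF)) *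
      (0*γ u + 0*qF u + 1*q u + -μ)) =
      intI (fun u => γ u * q u) + 2*δ*intI (fun u => qF u * q u) - (1+2*δ*μF)*μ := by
    rw [hbxy]; ring
  have hbW2 := intI_bilin γ qF q hγi hqFi hqi hγ2i hqF2i hq2i hγqF hγq hqFq
      0 1 (-1) 0 0 1 (-1) 0
  rw [hγ1, hqFm, hqm, hγ2, hqF2, hq2m, hC] at hbW2
  have hW2q : W2 qF q = μF^2 + σF^2 + (μ^2 + σ^2) - 2*intI (fun u => qF u * q u) := by
    have e : (fun u => (qF u - q u)^2) = (fun u => (0*γ u + 1*qF u + (-1)*q u + 0) *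
        (0*γ u + 1*qF u + (-1)*q u + 0)) := funext fun u => by ring
    simp only [W2]
    rw [e, hbW2]; ring
  have hJq : Jpen γ qF δ q = μ - δ*(εmin + 2*σ*σF) +
      (intI (fun u => γ u * q u) + 2*δ*intI (fun u => qF u * q u) - (1+2*δ*μF)*μ) := by
    simp only [Jpen]
    rw [hW2q]
    linear_combination δ * hεmin
  set Aq := intI (fun u => γ u * q u) with hAqdef
  set Bq := intI (fun u => qF u * q u) with hBqdef
  have hbq := intI_bilin γ qF q hγi hqFi hqi hγ2i hqF2i hq2i hγqF hγq hqFq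
      (-(Aq + 2*δ*Bq - (1+2*δ*μF)*μ)) (-(2*δ*(Aq + 2*δ*Bq - (1+2*δ*μF)*μ)))
      (σ0^2 + 4*δ^2*σF^2 + 4*δ*σ0*σF*ρ)
      ((Aq + 2*δ*Bq - (1+2*δ*μF)*μ)*(1+2*δ*μF) - (σ0^2 + 4*δ^2*σF^2 + 4*δ*σ0*σF*ρ)*μ)
      (-(Aq + 2*δ*Bq - (1+2*δ*μF)*μ)) (-(2*δ*(Aq + 2*δ*Bq - (1+2*δ*μF)*μ)))
      (σ0^2 + 4*δ^2*σF^2 + 4*δ*σ0*σF*ρ)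
      ((Aq + 2*δ*Bq - (1+2*δ*μF)*μ)*(1+2*δ*μF) - (σ0^2 + 4*δ^2*σF^2 + 4*δ*σ0*σF*ρ)*μ)
  rw [hγ1, hqFm, hqm, hγ2, hqF2, hq2m, hC, ← hAqdef, ← hBqdef] at hbq
  have hquadval : intI (fun u =>
      ((-(Aq + 2*δ*Bq - (1+2*δ*μF)*μ)) * γ u + (-(2*δ*(Aq + 2*δ*Bq - (1+2*δ*μF)*μ))) * qF u +
        (σ0^2 + 4*δ^2*σF^2 + 4*δ*σ0*σF*ρ) * q u +
        ((Aq + 2*δ*Bq - (1+2*δ*μF)*μ)*(1+2*δ*μF) - (σ0^2 + 4*δ^2*σF^2 + 4*δ*σ0*σF*ρ)*μ)) *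
      ((-(Aq + 2*δ*Bq - (1+2*δ*μF)*μ)) * γ u + (-(2*δ*(Aq + 2*δ*Bq - (1+2*δ*μF)*μ))) * qF u +
        (σ0^2 + 4*δ^2*σF^2 + 4*δ*σ0*σF*ρ) * q u +
        ((Aq + 2*δ*Bq - (1+2*δ*μF)*μ)*(1+2*δ*μF) - (σ0^2 + 4*δ^2*σF^2 + 4*δ*σ0*σF*ρ)*μ))) =
      (σ0^2 + 4*δ^2*σF^2 + 4*δ*σ0*σF*ρ) *
        ((σ0^2 + 4*δ^2*σF^2 + 4*δ*σ0*σF*ρ) * σ^2 - (Aq + 2*δ*Bq - (1+2*δ*μF)*μ)^2) := by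
    rw [hbq]; ring
  have hquadpos : 0 ≤ intI (fun u =>
      ((-(Aq + 2*δ*Bq - (1+2*δ*μF)*μ)) * γ u + (-(2*δ*(Aq + 2*δ*Bq - (1+2*δ*μF)*μ))) * qF u +
        (σ0^2 + 4*δ^2*σF^2 + 4*δ*σ0*σF*ρ) * q u +
        ((Aq + 2*δ*Bq - (1+2*δ*μF)*μ)*(1+2*δ*μF) - (σ0^2 + 4*δ^2*σF^2 + 4*δ*σ0*σF*ρ)*μ)) *
      ((-(Aq + 2*δ*Bq - (1+2*δ*μF)*μ)) * γ u + (-(2*δ*(Aq + 2*δ*Bq - (1+2*δ*μF)*μ))) * qF u +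
        (σ0^2 + 4*δ^2*σF^2 + 4*δ*σ0*σF*ρ) * q u +
        ((Aq + 2*δ*Bq - (1+2*δ*μF)*μ)*(1+2*δ*μF) - (σ0^2 + 4*δ^2*σF^2 + 4*δ*σ0*σF*ρ)*μ))) :=
    setIntegral_nonneg measurableSet_Ioo (fun u hu => mul_self_nonneg _)
  have hquadint : IntegrableOn (fun u =>
      ((-(Aq + 2*δ*Bq - (1+2*δ*μF)*μ)) * γ u + (-(2*δ*(Aq + 2*δ*Bq - (1+2*δ*μF)*μ))) * qF u +
        (σ0^2 + 4*δ^2*σF^2 + 4*δ*σ0*σF*ρ) * q u +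
        ((Aq + 2*δ*Bq - (1+2*δ*μF)*μ)*(1+2*δ*μF) - (σ0^2 + 4*δ^2*σF^2 + 4*δ*σ0*σF*ρ)*μ)) *
      ((-(Aq + 2*δ*Bq - (1+2*δ*μF)*μ)) * γ u + (-(2*δ*(Aq + 2*δ*Bq - (1+2*δ*μF)*μ))) * qF u +
        (σ0^2 + 4*δ^2*σF^2 + 4*δ*σ0*σF*ρ) * q u +
        ((Aq + 2*δ*Bq - (1+2*δ*μF)*μ)*(1+2*δ*μF) - (σ0^2 + 4*δ^2*σF^2 + 4*δ*σ0*σF*ρ)*μ))) (Ioo (0:ℝ) 1) volume :=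
    bilin_integrable γ qF q hγi hqFi hqi hγ2i hqF2i hq2i hγqF hγq hqFq _ _ _ _ _ _ _ _
  set Eq := Aq + 2*δ*Bq - (1+2*δ*μF)*μ with hEqdef
  set Ve := σ0^2 + 4*δ^2*σF^2 + 4*δ*σ0*σF*ρ with hVedef
  have hSsq : Eq^2 ≤ Ve * σ^2 := by
    nlinarith only [hquadpos, hquadval, hVδpos]
  have hE2 : Eq^2 ≤ (σ*σδ)^2 := by
    rw [mul_pow, hσδsq]; nlinarith only [hSsq]
  have hSle : Eq ≤ σ*σδ := by
    nlinarith only [hE2, mul_pos hσpos hσδpos]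
  constructor
  · rw [hJq]; linarith only [hSle]
  constructor
  · intro heq
    have hE : Eq = σ*σδ := by rw [hJq] at heq; linarith only [heq]
    have hz : intI (fun u =>
      (-Eq * γ u + -(2*δ*Eq) * qF u + Ve * q u + (Eq*(1+2*δ*μF) - Ve*μ)) *
      (-Eq * γ u + -(2*δ*Eq) * qF u + Ve * q u + (Eq*(1+2*δ*μF) - Ve*μ))) = 0 := by
      rw [hquadval, hE]
      linear_combination (-(Ve * σ^2)) * hσδsq
    have haez := (integral_eq_zero_iff_of_nonneg_ae
      (Eventually.of_forall (fun u => mul_self_nonneg _)) hquadint).mp hz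
    show q =ᵐ[(volume : Measure ℝ).restrict (Ioo (0:ℝ) 1)] qD μ σ μF σ0 σF ρ δ γ qF
    filter_upwards [haez] with u hu
    simp only [Pi.zero_apply] at hu
    have h9 := mul_self_eq_zero.mp hu
    have h10 : σδ * (σδ*(q u - μ) - σ*(γ u + 2*δ*qF u - (1+2*δ*μF))) = 0 := by
      linear_combination h9 + (q u - μ) * hσδsq - ((1+2*δ*μF) - γ u - 2*δ*qF u) * hE
    have h11 : σδ*(q u - μ) - σ*(γ u + 2*δ*qF u - (1+2*δ*μF)) = 0 :=
      (mul_eq_zero.mp h10).resolve_left hσδpos.ne'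
    rw [hqDpt u]
    field_simp
    linear_combination h11
  · intro hae
    have hae' : q =ᵐ[(volume : Measure ℝ).restrict (Ioo (0:ℝ) 1)] qD μ σ μF σ0 σF ρ δ γ qF := hae
    have hcongr : intI (fun u => (1*γ u + 2*δ*qF u + 0*q u + -(1+2*δ*μF)) *
        (0*γ u + 0*qF u + 1*q u + -μ)) =
        intI (fun u => (1*γ u + 2*δ*qF u + 0*qF u + -(1+2*δ*μF)) *
        ((σ/σδ)*γ u + (2*δ*(σ/σδ))*qF u + 0*qF u + -(σ/σδ*(1+2*δ*μF)))) := by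
      unfold intI
      apply integral_congr_ae
      filter_upwards [hae'] with u hu
      rw [hu, hqDpt u]; ring
    have hbD := intI_bilin γ qF qF hγi hqFi hqFi hγ2i hqF2i hqF2i hγqF hγqF hqFqF
        1 (2*δ) 0 (-(1+2*δ*μF)) (σ/σδ) (2*δ*(σ/σδ)) 0 (-(σ/σδ*(1+2*δ*μF)))
    rw [hγ1, hqFm, hγ2, hqF2, hqFm2, hC] at hbD
    have hcv : σ/σδ * (σ0^2 + 4*δ^2*σF^2 + 4*δ*σ0*σF*ρ) = σ*σδ := by
      have h := hσδsq
      rw [hVedef] at h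
      rw [← h]
      field_simp
    have hE : Eq = σ*σδ := by
      rw [← hxy, hcongr, hbD]
      linear_combination hcv
    rw [hJq, hE]
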